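/- Let Δ be a simplicial complex on vertex set {1,…,d} and for each maximal face (facet) a of Δ let J_a ⊆ ℤ[y₁^{±1},…,y_d^{±1}] be the ideal generated by {y_j − 1 : j ∉ a}. Then the intersection ⋂_a J_a over all facets a equals the ideal generated by the products ∏_{j∈σ}(1 − y_j) where σ ranges over the minimal non-faces of Δ, provided Δ is the simplicial complex dual to a homology polytope (i.e. every minimal non-face σ satisfies: σ is not contained in any facet). -/

import Mathlib

open AddMonoidAlgebra

/-- The Laurent polynomial ring `ℤ[y₁^{±1},…,y_d^{±1}]` in `d` variables. -/
abbrev LaurentRing (d : ℕ) := AddMonoidAlgebra ℤ (Fin d → ℤ)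

/-- The Laurent monomial `y_j`. -/
noncomputable def Yvar {d : ℕ} (j : Fin d) : LaurentRing d :=
  AddMonoidAlgebra.single (Pi.single j 1) 1

/-- The ideal `J_a = ⟨y_j − 1 : j ∉ a⟩`. -/
noncomputable def Jideal {d : ℕ} (a : Finset (Fin d)) : Ideal (LaurentRing d) :=
  Ideal.span {f : LaurentRing d | ∃ j ∉ a, f = Yvar j - 1}

/-- `a` is a facet (maximal face) of the simplicial complex `Δ`. -/
def IsFacet {d : ℕ} (Δ : Set (Finset (Fin d))) (a : Finset (Fin d)) : Prop :=
  a ∈ Δ ∧ ∀ b ∈ Δ, a ⊆ b → b = a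

/-- `σ` is a minimal non-face of `Δ`. -/
def IsMinNonFace {d : ℕ} (Δ : Set (Finset (Fin d))) (σ : Finset (Fin d)) : Prop :=
  σ ∉ Δ ∧ ∀ τ : Finset (Fin d), τ ⊂ σ → τ ∈ Δ

/-! In the variables `x_j = 1 - y_j`, every Laurent polynomial becomes, after multiplication by
a unit monomial, a polynomial `p` in the `x_j`. The specialization `y_j ↦ 1` for `j ∉ a` kills
`J_a` and, on the `x`-side, keeps exactly the monomials of `p` supported in `a`. Hence if `f`
lies in every `J_a`, no monomial of `p` is supported in a face, so each is divisible by
`∏_{j∈σ} x_j` for a minimal non-face `σ`. Conversely, the duality hypothesis puts some `j ∉ a`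
in every minimal non-face, so `∏_{j∈σ} x_j ∈ J_a`. -/

open MvPolynomial

noncomputable section

section ZeroOutside

variable {R ι : Type*} [CommSemiring R] [DecidableEq ι]

variable (R) in
def zeroOutside (a : Finset ι) : MvPolynomial ι R →ₐ[R] MvPolynomial ι R :=
  aeval fun j => if j ∈ a then X j else 0

lemma zeroOutside_monomial (a : Finset ι) (n : ι →₀ ℕ) (c : R) :
    zeroOutside R a (monomial n c) = if n.support ⊆ a then monomial n c else 0 := by
  rw [zeroOutside, aeval_monomial, monomial_eq]
  split_ifs with hn
  · congr 1
    exact Finset.prod_congr rfl fun j hj => by simp [hn hj]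
  · obtain ⟨j, hjn, hja⟩ := Finset.not_subset.mp hn
    rw [Finsupp.prod, Finset.prod_eq_zero hjn (by simp [hja, Finsupp.mem_support_iff.mp hjn]),
      mul_zero]

lemma coeff_zeroOutside {a : Finset ι} {m : ι →₀ ℕ} (hm : m.support ⊆ a)
    (q : MvPolynomial ι R) : coeff m (zeroOutside R a q) = coeff m q := by
  induction q using MvPolynomial.induction_on' with
  | monomial n c =>
    rw [zeroOutside_monomial]
    split_ifs with hn
    · rfl
    · rw [MvPolynomial.coeff_zero, coeff_monomial, if_neg (by rintro rfl; exact hn hm)]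
  | add p q hp hq => rw [map_add, MvPolynomial.coeff_add, MvPolynomial.coeff_add, hp, hq]

end ZeroOutside

variable {d : ℕ}

def castExponent (d : ℕ) : (Fin d →₀ ℕ) →+ (Fin d → ℤ) :=
  Finsupp.coeFnAddHom.comp (Finsupp.mapRange.addMonoidHom (Nat.castAddMonoidHom ℤ))

@[simp]
lemma castExponent_apply (m : Fin d →₀ ℕ) (j : Fin d) : castExponent d m j = m j := rfl

lemma castExponent_injective : Function.Injective (castExponent d) := fun m n h =>
  Finsupp.ext fun j => by simpa using congrFun h j

def toLaurent (d : ℕ) : MvPolynomial (Fin d) ℤ →ₐ[ℤ] LaurentRing d :=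
  AddMonoidAlgebra.mapDomainAlgHom ℤ ℤ (castExponent d)

lemma toLaurent_injective : Function.Injective (toLaurent d) :=
  mapDomain_injective castExponent_injective

lemma toLaurent_monomial (m : Fin d →₀ ℕ) (c : ℤ) :
    toLaurent d (monomial m c) = single (castExponent d m) c :=
  mapDomain_single

lemma toLaurent_X (j : Fin d) : toLaurent d (X j) = Yvar j := by
  rw [X, toLaurent_monomial, Yvar]
  congr 1
  ext k
  simp [Pi.single_apply, Finsupp.single_apply, eq_comm]

lemma single_mem_range_toLaurent {v : Fin d → ℤ} (hv : 0 ≤ v) (c : ℤ) :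
    single v c ∈ (toLaurent d).range := by
  refine ⟨monomial (Finsupp.equivFunOnFinite.symm fun j => (v j).toNat) c, ?_⟩
  change toLaurent d _ = _
  rw [toLaurent_monomial]
  congr 1
  ext j
  simpa using hv j

lemma exists_single_mul_mem_range_toLaurent (f : LaurentRing d) :
    ∃ N : Fin d → ℤ, 0 ≤ N ∧ single N 1 * f ∈ (toLaurent d).range := by
  induction f using AddMonoidAlgebra.induction_on with
  | of v =>
    refine ⟨fun j => |v j|, fun j => abs_nonneg (v j), ?_⟩
    rw [of_apply, single_mul_single, one_mul]
    refine single_mem_range_toLaurent (fun j => ?_) 1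
    simpa [neg_le_iff_add_nonneg, add_comm] using neg_le_abs (v j)
  | add f g hf hg =>
    obtain ⟨N, hN, hNf⟩ := hf
    obtain ⟨M, hM, hMg⟩ := hg
    refine ⟨N + M, add_nonneg hN hM, ?_⟩
    have hsplit : single (N + M) 1 * (f + g) =
        single M 1 * (single N 1 * f) + single N 1 * (single M 1 * g) := by
      simp only [mul_add, ← mul_assoc, single_mul_single, mul_one, add_comm M N]
    rw [hsplit]
    exact add_mem (mul_mem (single_mem_range_toLaurent hM 1) hNf)
      (mul_mem (single_mem_range_toLaurent hN 1) hMg)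
  | smul r f hf =>
    obtain ⟨N, hN, hNf⟩ := hf
    exact ⟨N, hN, by rw [mul_smul_comm]; exact Subalgebra.smul_mem _ hNf r⟩

def substOneSub (d : ℕ) : MvPolynomial (Fin d) ℤ →ₐ[ℤ] MvPolynomial (Fin d) ℤ :=
  aeval fun j => 1 - X j

lemma substOneSub_involutive : Function.Involutive (substOneSub d) := by
  have hcomp : (substOneSub d).comp (substOneSub d) = AlgHom.id ℤ _ :=
    algHom_ext fun j => by simp [substOneSub]
  exact AlgHom.congr_fun hcomp

def toLaurentOneSub (d : ℕ) : MvPolynomial (Fin d) ℤ →ₐ[ℤ] LaurentRing d :=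
  aeval fun j => 1 - Yvar j

lemma toLaurentOneSub_eq_comp : toLaurentOneSub d = (toLaurent d).comp (substOneSub d) :=
  algHom_ext fun j => by simp [toLaurentOneSub, substOneSub, toLaurent_X]

lemma toLaurentOneSub_injective : Function.Injective (toLaurentOneSub d) := by
  rw [toLaurentOneSub_eq_comp]
  exact toLaurent_injective.comp substOneSub_involutive.injective

lemma exists_isUnit_mul_eq_toLaurentOneSub (f : LaurentRing d) :
    ∃ u : LaurentRing d, IsUnit u ∧ ∃ p, u * f = toLaurentOneSub d p := by
  obtain ⟨N, -, q, hq⟩ := exists_single_mul_mem_range_toLaurent f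
  have hunit : IsUnit (single N 1 : LaurentRing d) :=
    IsUnit.of_mul_eq_one (single (-N) 1) (by rw [single_mul_single, add_neg_cancel, one_mul]; rfl)
  refine ⟨_, hunit, substOneSub d q, ?_⟩
  rw [toLaurentOneSub_eq_comp, AlgHom.comp_apply, substOneSub_involutive]
  exact hq.symm

def restrictExponent (a : Finset (Fin d)) : (Fin d → ℤ) →+ (Fin d → ℤ) :=
  AddMonoidHom.pi fun j => if j ∈ a then Pi.evalAddMonoidHom (fun _ => ℤ) j else 0

lemma restrictExponent_apply (a : Finset (Fin d)) (v : Fin d → ℤ) (j : Fin d) :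
    restrictExponent a v j = if j ∈ a then v j else 0 := by
  simp only [restrictExponent, AddMonoidHom.pi_apply]
  split_ifs <;> rfl

def killOutside (a : Finset (Fin d)) : LaurentRing d →ₐ[ℤ] LaurentRing d :=
  AddMonoidAlgebra.mapDomainAlgHom ℤ ℤ (restrictExponent a)

lemma killOutside_Yvar (a : Finset (Fin d)) (j : Fin d) :
    killOutside a (Yvar j) = if j ∈ a then Yvar j else 1 := by
  rw [Yvar, killOutside, mapDomainAlgHom_apply, mapDomain_single,
    AddMonoidAlgebra.one_def, ← apply_ite (single · (1 : ℤ))]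
  congr 1
  ext k
  by_cases hk : k = j <;> by_cases hj : j ∈ a <;> simp_all [restrictExponent_apply]

lemma Jideal_le_ker_killOutside (a : Finset (Fin d)) :
    Jideal a ≤ RingHom.ker (killOutside a) := by
  rw [Jideal, Ideal.span_le]
  rintro _ ⟨j, hj, rfl⟩
  simp [killOutside_Yvar, hj]

lemma killOutside_comp_toLaurentOneSub (a : Finset (Fin d)) :
    (killOutside a).comp (toLaurentOneSub d) = (toLaurentOneSub d).comp (zeroOutside ℤ a) :=
  algHom_ext fun j => by
    by_cases hj : j ∈ a <;> simp [toLaurentOneSub, zeroOutside, killOutside_Yvar, hj]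

lemma coeff_eq_zero_of_toLaurentOneSub_mem_Jideal {a : Finset (Fin d)}
    {q : MvPolynomial (Fin d) ℤ} (hq : toLaurentOneSub d q ∈ Jideal a)
    {m : Fin d →₀ ℕ} (hm : m.support ⊆ a) : coeff m q = 0 := by
  have hzero : zeroOutside ℤ a q = 0 := toLaurentOneSub_injective <| by
    rw [map_zero, ← AlgHom.comp_apply, ← killOutside_comp_toLaurentOneSub, AlgHom.comp_apply]
    exact Jideal_le_ker_killOutside a hq
  rw [← coeff_zeroOutside hm, hzero, MvPolynomial.coeff_zero]

lemma prod_one_sub_Yvar_dvd_toLaurentOneSub_monomial {σ : Finset (Fin d)}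
    {m : Fin d →₀ ℕ} (hσ : σ ⊆ m.support) (c : ℤ) :
    ∏ j ∈ σ, (1 - Yvar j) ∣ toLaurentOneSub d (monomial m c) := by
  have hdvd : ∏ j ∈ σ, (X j : MvPolynomial (Fin d) ℤ) ∣ monomial m c := by
    rw [monomial_eq]
    refine Dvd.dvd.mul_left ((Finset.prod_dvd_prod_of_dvd _ _ fun j hj => ?_).trans
      (Finset.prod_dvd_prod_of_subset _ _ _ hσ)) _
    exact dvd_pow_self _ (Finsupp.mem_support_iff.mp (hσ hj))
  simpa [toLaurentOneSub] using map_dvd (toLaurentOneSub d) hdvd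

lemma one_sub_Yvar_mem_Jideal {a : Finset (Fin d)} {j : Fin d} (hj : j ∉ a) :
    1 - Yvar j ∈ Jideal a := by
  simpa using (Jideal a).neg_mem (Ideal.subset_span ⟨j, hj, rfl⟩)

lemma exists_isMinNonFace_subset (Δ : Set (Finset (Fin d))) {τ : Finset (Fin d)}
    (hτ : τ ∉ Δ) : ∃ σ ⊆ τ, IsMinNonFace Δ σ := by
  obtain ⟨σ, hστ, hmin⟩ := exists_minimal_le_of_wellFoundedLT (· ∉ Δ) τ hτ
  exact ⟨σ, hστ, hmin.prop, fun τ' hτ' => not_not.mp (hmin.not_prop_of_lt hτ')⟩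

end

theorem stmt_9_general (d : ℕ) (Δ : Set (Finset (Fin d)))
    (hfacet : ∀ a ∈ Δ, ∃ b : Finset (Fin d), IsFacet Δ b ∧ a ⊆ b)
    (hdual : ∀ σ : Finset (Fin d), IsMinNonFace Δ σ →
      ∀ a : Finset (Fin d), IsFacet Δ a → ¬ σ ⊆ a) :
    (⨅ a ∈ {a : Finset (Fin d) | IsFacet Δ a}, Jideal a) =
      Ideal.span {f : LaurentRing d |
        ∃ σ : Finset (Fin d), IsMinNonFace Δ σ ∧ f = ∏ j ∈ σ, (1 - Yvar j)} := by
  set I := Ideal.span {f : LaurentRing d |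
    ∃ σ : Finset (Fin d), IsMinNonFace Δ σ ∧ f = ∏ j ∈ σ, (1 - Yvar j)}
  have mem_iInf : ∀ f, f ∈ (⨅ a ∈ {a | IsFacet Δ a}, Jideal a) ↔
      ∀ a, IsFacet Δ a → f ∈ Jideal a := fun f => by
    simp only [Submodule.mem_iInf, Set.mem_ofPred_eq]
  refine le_antisymm (fun f hf => ?_) (Ideal.span_le.mpr ?_)
  · obtain ⟨u, hu, p, hp⟩ := exists_isUnit_mul_eq_toLaurentOneSub f
    have hpJ : ∀ a, IsFacet Δ a → toLaurentOneSub d p ∈ Jideal a := fun a ha =>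
      hp ▸ Ideal.mul_mem_left _ u ((mem_iInf f).mp hf a ha)
    rw [← Ideal.unit_mul_mem_iff_mem I hu, hp, p.as_sum, map_sum]
    refine Ideal.sum_mem I fun m hm => ?_
    have hmΔ : m.support ∉ Δ := fun hmΔ => by
      obtain ⟨a, ha, hma⟩ := hfacet _ hmΔ
      exact mem_support_iff.mp hm (coeff_eq_zero_of_toLaurentOneSub_mem_Jideal (hpJ a ha) hma)
    obtain ⟨σ, hσm, hσ⟩ := exists_isMinNonFace_subset Δ hmΔ
    exact Ideal.mem_of_dvd I (prod_one_sub_Yvar_dvd_toLaurentOneSub_monomial hσm _)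
      (Ideal.subset_span ⟨σ, hσ, rfl⟩)
  · rintro _ ⟨σ, hσ, rfl⟩
    refine (mem_iInf _).mpr fun a ha => ?_
    obtain ⟨j, hjσ, hja⟩ := Finset.not_subset.mp (hdual σ hσ a ha)
    exact Ideal.mem_of_dvd _ (Finset.dvd_prod_of_mem _ hjσ) (one_sub_Yvar_mem_Jideal hja)

/-- For a simplicial complex `Δ` on `{1,…,d}` (dual to a homology polytope, so
that no minimal non-face is contained in a facet), the intersection of the
ideals `J_a = ⟨y_j − 1 : j ∉ a⟩` over all facets `a` equals the ideal generated
by the products `∏_{j∈σ}(1 − y_j)` over all minimal non-faces `σ`. -/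
theorem stmt_9 (d : ℕ) (Δ : Set (Finset (Fin d)))
    (hlower : ∀ a ∈ Δ, ∀ b : Finset (Fin d), b ⊆ a → b ∈ Δ)
    (hmem : ∅ ∈ Δ)
    (hfacet : ∀ a ∈ Δ, ∃ b : Finset (Fin d), IsFacet Δ b ∧ a ⊆ b)
    (hdual : ∀ σ : Finset (Fin d), IsMinNonFace Δ σ →
      ∀ a : Finset (Fin d), IsFacet Δ a → ¬ σ ⊆ a) :
    (⨅ a ∈ {a : Finset (Fin d) | IsFacet Δ a}, Jideal a) =
      Ideal.span {f : LaurentRing d |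
        ∃ σ : Finset (Fin d), IsMinNonFace Δ σ ∧ f = ∏ j ∈ σ, (1 - Yvar j)} :=
  stmt_9_general d Δ hfacet hdual
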